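/- Let X and Y be Banach spaces with X compactly embedded in Y, let p > 1, and let (Z_n) be a sequence of Y-valued random variables on a probability space (Ω, ℙ) with each Z_n ∈ L^p(Ω, X) and sup_n E[‖Z_n‖_X^p] < ∞. Suppose there is a subspace D ⊂ X* separating the points of Y and a random variable Z ∈ L^p(Ω, X) such that for every f ∈ D, f(Z_n) → f(Z) almost surely. Then for every 1 ≤ q < p, Z_n → Z in L^q(Ω, Y). -/

import Mathlib

open MeasureTheory Filter Topology
open scoped ENNReal NNReal

lemma aux_sep {Y : Type*} [NormedAddCommGroup Y] [NormedSpace ℝ Y]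
    (D : Set (Y →L[ℝ] ℝ)) (hsep : ∀ y : Y, y ≠ 0 → ∃ f ∈ D, f y ≠ 0)
    {K : Set Y} (hK : IsCompact K) (h0 : (0:Y) ∉ K) :
    ∃ t : Finset (Y →L[ℝ] ℝ), ↑t ⊆ D ∧ ∃ δ : ℝ, 0 < δ ∧
      ∀ y ∈ K, δ ≤ ∑ f ∈ t, |f y| := by
  rcases K.eq_empty_or_nonempty with hKe | hKne
  · exact ⟨∅, by simp, 1, one_pos, by simp [hKe]⟩
  · set U : D → Set Y := fun f => {y | 0 < |(f : Y →L[ℝ] ℝ) y|} with hU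
    have hUopen : ∀ f : D, IsOpen (U f) := fun f =>
      isOpen_lt continuous_const ((f : Y →L[ℝ] ℝ).continuous.abs)
    have hcover : K ⊆ ⋃ f : D, U f := by
      intro y hy
      obtain ⟨f, hfD, hf⟩ := hsep y (fun h => h0 (h ▸ hy))
      exact Set.mem_iUnion.2 ⟨⟨f, hfD⟩, abs_pos.2 hf⟩
    obtain ⟨s, hs⟩ := hK.elim_finite_subcover U hUopen hcover
    classical
    set t : Finset (Y →L[ℝ] ℝ) := s.image (fun f : D => (f : Y →L[ℝ] ℝ)) with ht
    have htD : ↑t ⊆ D := by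
      intro f hf
      simp only [ht, Finset.coe_image, Set.mem_image] at hf
      obtain ⟨g, _, rfl⟩ := hf
      exact g.2
    have hpos : ∀ y ∈ K, 0 < ∑ f ∈ t, |f y| := by
      intro y hy
      obtain ⟨g, hgs, hgy⟩ := Set.mem_iUnion₂.1 (hs hy)
      refine Finset.sum_pos' (fun f _ => abs_nonneg _) ⟨(g : Y →L[ℝ] ℝ), ?_, hgy⟩
      exact Finset.mem_image_of_mem (fun f : D => (f : Y →L[ℝ] ℝ)) hgs
    have hcont : ContinuousOn (fun y => ∑ f ∈ t, |f y|) K :=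
      (continuous_finset_sum t fun f _ => f.continuous.abs).continuousOn
    obtain ⟨y₀, hy₀K, hy₀⟩ := hK.exists_isMinOn hKne hcont
    exact ⟨t, htD, _, hpos y₀ hy₀K, fun y hy => hy₀ hy⟩

lemma aux_rpow_add_le {a b p : ℝ} (ha : 0 ≤ a) (hb : 0 ≤ b) (hp : 0 ≤ p) :
    (a + b) ^ p ≤ 2 ^ p * (a ^ p + b ^ p) := by
  have h1 : a + b ≤ 2 * max a b := by
    rcases le_total a b with h | h
    · simp [max_eq_right h]; linarith
    · simp [max_eq_left h]; linarith
  calc (a + b) ^ p ≤ (2 * max a b) ^ p :=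
        Real.rpow_le_rpow (by positivity) h1 hp
    _ = 2 ^ p * (max a b) ^ p := Real.mul_rpow (by norm_num) (le_max_of_le_left ha)
    _ ≤ 2 ^ p * (a ^ p + b ^ p) := by
        apply mul_le_mul_of_nonneg_left _ (by positivity)
        rcases le_total a b with h | h
        · rw [max_eq_right h]
          exact le_add_of_nonneg_left (Real.rpow_nonneg ha p)
        · rw [max_eq_left h]
          exact le_add_of_nonneg_right (Real.rpow_nonneg hb p)

/-- Let `X ↪↪ Y` be Banach spaces with a compact embedding `ι`, `p > 1`,
and `(Z_n)` random variables with values in `X`, with `sup_n E[‖Z_n‖_X^p] < ∞`. If a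
point-separating family `D` of continuous functionals on `Y` satisfies
`f(Z_n) → f(Z)` a.s. for each `f ∈ D`, then `Z_n → Z` in `L^q(Ω, Y)` for all
`1 ≤ q < p`. -/
theorem statement3 {X Y : Type*}
    [NormedAddCommGroup X] [NormedSpace ℝ X] [CompleteSpace X]
    [NormedAddCommGroup Y] [NormedSpace ℝ Y] [CompleteSpace Y]
    [MeasurableSpace X] [BorelSpace X]
    (ι : X →L[ℝ] Y) (hinj : Function.Injective ι)
    (hcpt : ∀ B : Set X, Bornology.IsBounded B → IsCompact (closure (ι '' B)))
    {Ω : Type*} [MeasurableSpace Ω] (ℙ : Measure Ω) [IsProbabilityMeasure ℙ]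
    (p : ℝ) (hp : 1 < p)
    (Z : ℕ → Ω → X) (Zlim : Ω → X)
    (hZmeas : ∀ n, AEStronglyMeasurable (Z n) ℙ)
    (hZlimmeas : AEStronglyMeasurable Zlim ℙ)
    (hZp : ∀ n, Integrable (fun ω => ‖Z n ω‖ ^ p) ℙ)
    (hZlimp : Integrable (fun ω => ‖Zlim ω‖ ^ p) ℙ)
    (hbdd : ∃ C : ℝ, ∀ n, ∫ ω, ‖Z n ω‖ ^ p ∂ℙ ≤ C)
    (D : Set (Y →L[ℝ] ℝ))
    (hsep : ∀ y y' : Y, y ≠ y' → ∃ f ∈ D, f y ≠ f y')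
    (hconv : ∀ f ∈ D, ∀ᵐ ω ∂ℙ,
      Tendsto (fun n => f (ι (Z n ω))) atTop (nhds (f (ι (Zlim ω))))) :
    ∀ q : ℝ, 1 ≤ q → q < p →
      Tendsto (fun n => ∫ ω, ‖ι (Z n ω) - ι (Zlim ω)‖ ^ q ∂ℙ) atTop (nhds 0) := by
  intro q hq hqp
  obtain ⟨C, hC⟩ := hbdd
  have hp0 : (0:ℝ) < p := lt_trans one_pos hp
  have hq0 : (0:ℝ) < q := lt_of_lt_of_le one_pos hq
  set W : ℕ → Ω → ℝ := fun n ω => ‖ι (Z n ω) - ι (Zlim ω)‖ with hWdef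
  have hWnonneg : ∀ n ω, 0 ≤ W n ω := fun n ω => norm_nonneg _
  have hWm : ∀ n, AEStronglyMeasurable (W n) ℙ := fun n =>
    ((ι.continuous.comp_aestronglyMeasurable (hZmeas n)).sub
      (ι.continuous.comp_aestronglyMeasurable hZlimmeas)).norm
  set I : ℝ := ∫ ω, ‖Zlim ω‖ ^ p ∂ℙ with hIdef
  have hInn : 0 ≤ I := integral_nonneg fun ω => Real.rpow_nonneg (norm_nonneg _) p
  have hC0 : 0 ≤ C := le_trans (integral_nonneg fun ω => Real.rpow_nonneg (norm_nonneg _) p) (hC 0)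
  -- domination of W^p
  have hdom : ∀ n ω, W n ω ^ p ≤ ‖ι‖ ^ p * 2 ^ p * (‖Z n ω‖ ^ p + ‖Zlim ω‖ ^ p) := by
    intro n ω
    have h1 : W n ω ≤ ‖ι‖ * (‖Z n ω‖ + ‖Zlim ω‖) := by
      have : W n ω = ‖ι (Z n ω - Zlim ω)‖ := by simp [hWdef, map_sub]
      rw [this]
      exact (ι.le_opNorm _).trans
        (mul_le_mul_of_nonneg_left (norm_sub_le _ _) (norm_nonneg ι))
    calc W n ω ^ p ≤ (‖ι‖ * (‖Z n ω‖ + ‖Zlim ω‖)) ^ p :=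
          Real.rpow_le_rpow (hWnonneg n ω) h1 hp0.le
      _ = ‖ι‖ ^ p * (‖Z n ω‖ + ‖Zlim ω‖) ^ p :=
          Real.mul_rpow (norm_nonneg ι) (by positivity)
      _ ≤ ‖ι‖ ^ p * (2 ^ p * (‖Z n ω‖ ^ p + ‖Zlim ω‖ ^ p)) :=
          mul_le_mul_of_nonneg_left
            (aux_rpow_add_le (norm_nonneg _) (norm_nonneg _) hp0.le) (by positivity)
      _ = ‖ι‖ ^ p * 2 ^ p * (‖Z n ω‖ ^ p + ‖Zlim ω‖ ^ p) := by ring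
  have hWpm : ∀ n, AEStronglyMeasurable (fun ω => W n ω ^ p) ℙ := fun n =>
    (Real.continuous_rpow_const hp0.le).comp_aestronglyMeasurable (hWm n)
  have hWpint : ∀ n, Integrable (fun ω => W n ω ^ p) ℙ := by
    intro n
    refine Integrable.mono' (((hZp n).add hZlimp).const_mul (‖ι‖ ^ p * 2 ^ p)) (hWpm n) ?_
    refine ae_of_all _ fun ω => ?_
    rw [Real.norm_eq_abs, abs_of_nonneg (Real.rpow_nonneg (hWnonneg n ω) p)]
    exact hdom n ω
  set C2 : ℝ := ‖ι‖ ^ p * 2 ^ p * (C + I) with hC2def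
  have hC2nn : 0 ≤ C2 := by positivity
  have hWpbdd : ∀ n, ∫ ω, W n ω ^ p ∂ℙ ≤ C2 := by
    intro n
    calc ∫ ω, W n ω ^ p ∂ℙ
        ≤ ∫ ω, ‖ι‖ ^ p * 2 ^ p * (‖Z n ω‖ ^ p + ‖Zlim ω‖ ^ p) ∂ℙ :=
          integral_mono (hWpint n) (((hZp n).add hZlimp).const_mul _) (fun ω => hdom n ω)
      _ = ‖ι‖ ^ p * 2 ^ p * (∫ ω, ‖Z n ω‖ ^ p ∂ℙ + I) := by
          rw [integral_const_mul, integral_add (hZp n) hZlimp]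
      _ ≤ C2 := by
          rw [hC2def]
          exact mul_le_mul_of_nonneg_left (add_le_add (hC n) le_rfl) (by positivity)
  -- convergence in measure
  have hmeas0 : ∀ ε : ℝ, 0 < ε →
      Tendsto (fun n => (ℙ {ω | ε ≤ W n ω}).toReal) atTop (𝓝 0) := by
    intro ε hε
    rw [NormedAddCommGroup.tendsto_nhds_zero]
    intro η hη
    -- choose R
    obtain ⟨R, hR1, hRC, hRI⟩ : ∃ R : ℝ, 1 ≤ R ∧ C / R ^ p < η / 4 ∧ I / R ^ p < η / 4 := by
      have h0 : Tendsto (fun R : ℝ => (max C I) * R ^ (-p)) atTop (𝓝 0) := by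
        simpa using (tendsto_rpow_neg_atTop hp0).const_mul (max C I)
      have hev := (tendsto_order.1 h0).2 (η / 4) (by linarith)
      obtain ⟨R, hR⟩ := ((eventually_ge_atTop (1:ℝ)).and hev).exists
      refine ⟨R, hR.1, ?_, ?_⟩ <;>
      · have hRp : (0:ℝ) < R ^ p := Real.rpow_pos_of_pos (by linarith [hR.1]) p
        have h2 : max C I * R ^ (-p) = max C I / R ^ p := by
          rw [Real.rpow_neg (by linarith [hR.1])]; ring
        rw [h2] at hR
        refine lt_of_le_of_lt ?_ hR.2
        gcongr
        first | exact le_max_left _ _ | exact le_max_right _ _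
    have hR0 : (0:ℝ) < R := lt_of_lt_of_le one_pos hR1
    -- tail bounds
    have htail : ∀ (g : Ω → X), Integrable (fun ω => ‖g ω‖ ^ p) ℙ →
        (ℙ {ω | R ≤ ‖g ω‖}).toReal ≤ (∫ ω, ‖g ω‖ ^ p ∂ℙ) / R ^ p := by
      intro g hg
      have hRp : (0:ℝ) < R ^ p := Real.rpow_pos_of_pos hR0 p
      have hmono : ℙ {ω | R ≤ ‖g ω‖} ≤ ℙ {ω | R ^ p ≤ ‖g ω‖ ^ p} :=
        measure_mono fun ω h => Real.rpow_le_rpow hR0.le h hp0.le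
      have hmar := mul_meas_ge_le_integral_of_nonneg
        (ae_of_all _ fun ω => Real.rpow_nonneg (norm_nonneg _) p) hg (R ^ p)
      rw [le_div_iff₀ hRp]
      calc (ℙ {ω | R ≤ ‖g ω‖}).toReal * R ^ p
          ≤ (ℙ {ω | R ^ p ≤ ‖g ω‖ ^ p}).toReal * R ^ p := by
            exact mul_le_mul_of_nonneg_right
              (ENNReal.toReal_mono (measure_ne_top _ _) hmono) hRp.le
        _ = R ^ p * (ℙ {ω | R ^ p ≤ ‖g ω‖ ^ p}).toReal := by ring
        _ ≤ ∫ ω, ‖g ω‖ ^ p ∂ℙ := hmar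
    -- compact set and separating functionals
    have hKcpt : IsCompact (closure (ι '' Metric.closedBall (0:X) (2*R)) ∩ {y : Y | ε ≤ ‖y‖}) := by
      exact (hcpt _ Metric.isBounded_closedBall).inter_right
        (isClosed_le continuous_const continuous_norm)
    have h0K : (0:Y) ∉ closure (ι '' Metric.closedBall (0:X) (2*R)) ∩ {y : Y | ε ≤ ‖y‖} := by
      intro h
      have := h.2
      simp only [Set.mem_setOf_eq, norm_zero] at this
      linarith
    obtain ⟨t, htD, δ, hδ, hδK⟩ := aux_sep D
      (fun y hy => by
        obtain ⟨f, hfD, hf⟩ := hsep y 0 hy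
        exact ⟨f, hfD, by simpa using hf⟩) hKcpt h0K
    -- a.e. convergence of the finite sum
    set g : ℕ → Ω → ℝ := fun n ω => ∑ f ∈ t, |f (ι (Z n ω)) - f (ι (Zlim ω))| with hgdef
    have hgnn : ∀ n ω, 0 ≤ g n ω := fun n ω =>
      Finset.sum_nonneg fun f _ => abs_nonneg _
    have hgm : ∀ n, AEStronglyMeasurable (g n) ℙ := by
      intro n
      apply Finset.aestronglyMeasurable_fun_sum
      intro f _
      exact _root_.continuous_abs.comp_aestronglyMeasurable
        (((f.continuous.comp ι.continuous).comp_aestronglyMeasurable (hZmeas n)).sub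
          ((f.continuous.comp ι.continuous).comp_aestronglyMeasurable hZlimmeas))
    have hgae : ∀ᵐ ω ∂ℙ, Tendsto (fun n => g n ω) atTop (𝓝 ((fun _ => (0:ℝ)) ω)) := by
      have h := (ae_ball_iff t.countable_toSet).2 fun f hf => hconv f (htD hf)
      filter_upwards [h] with ω hω
      have h2 : Tendsto (fun n => ∑ f ∈ t, |f (ι (Z n ω)) - f (ι (Zlim ω))|) atTop
          (𝓝 (∑ f ∈ t, (0:ℝ))) := by
        apply tendsto_finset_sum
        intro f hf
        have h3 := (hω f hf).sub (tendsto_const_nhds (x := f (ι (Zlim ω))))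
        rw [sub_self] at h3
        simpa using h3.abs
      simpa using h2
    have hSten : Tendsto (fun n => (ℙ {ω | δ ≤ g n ω}).toReal) atTop (𝓝 0) := by
      have hTIM : TendstoInMeasure ℙ g atTop (fun _ => (0:ℝ)) :=
        tendstoInMeasure_of_tendsto_ae hgm hgae
      have h1 := (tendstoInMeasure_iff_dist.1 hTIM) δ hδ
      have h2 : ∀ n, {ω | δ ≤ dist (g n ω) ((fun _ => (0:ℝ)) ω)} = {ω | δ ≤ g n ω} := by
        intro n
        ext ω
        simp [Real.dist_eq, abs_of_nonneg (hgnn n ω)]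
      simp_rw [h2] at h1
      have := (ENNReal.tendsto_toReal (a := 0) (by simp)).comp h1
      exact this
    -- inclusion
    have hincl : ∀ n, {ω | ε ≤ W n ω} ⊆
        ({ω | R ≤ ‖Z n ω‖} ∪ {ω | R ≤ ‖Zlim ω‖}) ∪ {ω | δ ≤ g n ω} := by
      intro n ω hω
      by_cases h1 : R ≤ ‖Z n ω‖
      · exact Or.inl (Or.inl h1)
      by_cases h2 : R ≤ ‖Zlim ω‖
      · exact Or.inl (Or.inr h2)
      push_neg at h1 h2
      right
      have hmem : ι (Z n ω) - ι (Zlim ω) ∈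
          closure (ι '' Metric.closedBall (0:X) (2*R)) ∩ {y : Y | ε ≤ ‖y‖} := by
        constructor
        · apply subset_closure
          refine ⟨Z n ω - Zlim ω, ?_, by simp [map_sub]⟩
          rw [Metric.mem_closedBall, dist_zero_right]
          calc ‖Z n ω - Zlim ω‖ ≤ ‖Z n ω‖ + ‖Zlim ω‖ := norm_sub_le _ _
            _ ≤ 2 * R := by linarith
        · exact hω
      have h3 := hδK _ hmem
      simp only [map_sub] at h3
      exact h3
    -- combine
    have hmeasle : ∀ n, (ℙ {ω | ε ≤ W n ω}).toReal ≤
        (ℙ {ω | R ≤ ‖Z n ω‖}).toReal + (ℙ {ω | R ≤ ‖Zlim ω‖}).toReal +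
          (ℙ {ω | δ ≤ g n ω}).toReal := by
      intro n
      have h1 : ℙ {ω | ε ≤ W n ω} ≤
          ℙ ({ω | R ≤ ‖Z n ω‖} ∪ {ω | R ≤ ‖Zlim ω‖}) + ℙ {ω | δ ≤ g n ω} :=
        (measure_mono (hincl n)).trans (measure_union_le _ _)
      have h2 : ℙ ({ω | R ≤ ‖Z n ω‖} ∪ {ω | R ≤ ‖Zlim ω‖}) ≤
          ℙ {ω | R ≤ ‖Z n ω‖} + ℙ {ω | R ≤ ‖Zlim ω‖} := measure_union_le _ _
      have h3 := h1.trans (add_le_add_left h2 _)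
      have h4 := ENNReal.toReal_mono (by finiteness) h3
      rwa [ENNReal.toReal_add (by finiteness) (by finiteness),
        ENNReal.toReal_add (by finiteness) (by finiteness)] at h4
    have hev := (tendsto_order.1 hSten).2 (η / 2) (by linarith)
    filter_upwards [hev] with n hn
    rw [Real.norm_eq_abs, abs_of_nonneg ENNReal.toReal_nonneg]
    have hb1 : (ℙ {ω | R ≤ ‖Z n ω‖}).toReal < η / 4 := by
      refine lt_of_le_of_lt ((htail (Z n) (hZp n)).trans ?_) hRC
      gcongr
      exact hC n
    have hb2 : (ℙ {ω | R ≤ ‖Zlim ω‖}).toReal < η / 4 :=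
      lt_of_le_of_lt (htail Zlim hZlimp) hRI
    have := hmeasle n
    linarith
  -- final step
  rw [NormedAddCommGroup.tendsto_nhds_zero]
  intro θ hθ
  obtain ⟨M, hM1, hMsmall⟩ : ∃ M : ℝ, 1 ≤ M ∧ M ^ (q - p) * C2 < θ / 3 := by
    have h0 : Tendsto (fun M : ℝ => M ^ (q - p) * C2) atTop (𝓝 0) := by
      have := (tendsto_rpow_neg_atTop (show (0:ℝ) < p - q by linarith)).mul_const C2
      simpa [neg_sub] using this
    have hev := (tendsto_order.1 h0).2 (θ / 3) (by linarith)
    obtain ⟨M, hM⟩ := ((eventually_ge_atTop (1:ℝ)).and hev).exists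
    exact ⟨M, hM.1, hM.2⟩
  have hM0 : (0:ℝ) < M := lt_of_lt_of_le one_pos hM1
  set ε : ℝ := (θ / 4) ^ q⁻¹ with hεdef
  have hεpos : 0 < ε := Real.rpow_pos_of_pos (by linarith) _
  have hεq : ε ^ q = θ / 4 := Real.rpow_inv_rpow (by linarith) (ne_of_gt hq0)
  have hev : ∀ᶠ n in atTop, M ^ q * (ℙ {ω | ε ≤ W n ω}).toReal < θ / 3 := by
    have h0 : Tendsto (fun n => M ^ q * (ℙ {ω | ε ≤ W n ω}).toReal) atTop (𝓝 0) := by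
      simpa using (hmeas0 ε hεpos).const_mul (M ^ q)
    exact (tendsto_order.1 h0).2 (θ / 3) (by linarith)
  filter_upwards [hev] with n hn
  set A' : Set Ω := toMeasurable ℙ {ω | ε ≤ W n ω} with hA'def
  have hA'meas : MeasurableSet A' := measurableSet_toMeasurable ℙ _
  have hptwise : ∀ ω, W n ω ^ q ≤
      ε ^ q + (A'.indicator (fun _ => M ^ q) ω + M ^ (q - p) * W n ω ^ p) := by
    intro ω
    have hεqnn : 0 ≤ ε ^ q := by positivity
    have hWp_nn : 0 ≤ M ^ (q - p) * W n ω ^ p := by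
      have := Real.rpow_nonneg (hWnonneg n ω) p
      positivity
    by_cases hA : ε ≤ W n ω
    · rw [Set.indicator_of_mem (subset_toMeasurable ℙ _ hA)]
      rcases le_total (W n ω) M with hWM | hWM
      · have h1 : W n ω ^ q ≤ M ^ q := Real.rpow_le_rpow (hWnonneg n ω) hWM hq0.le
        linarith
      · have hW0 : 0 < W n ω := lt_of_lt_of_le hM0 hWM
        have h1 : W n ω ^ q = W n ω ^ (q - p) * W n ω ^ p := by
          rw [← Real.rpow_add hW0]; ring_nf
        have h2 : W n ω ^ (q - p) ≤ M ^ (q - p) :=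
          Real.rpow_le_rpow_of_nonpos hM0 hWM (by linarith)
        have h3 : W n ω ^ (q - p) * W n ω ^ p ≤ M ^ (q - p) * W n ω ^ p :=
          mul_le_mul_of_nonneg_right h2 (Real.rpow_nonneg (hWnonneg n ω) p)
        have h4 : 0 ≤ M ^ q := by positivity
        linarith [h1 ▸ h3]
    · push_neg at hA
      have h1 : W n ω ^ q ≤ ε ^ q := Real.rpow_le_rpow (hWnonneg n ω) hA.le hq0.le
      have h2 : 0 ≤ A'.indicator (fun _ => M ^ q) ω :=
        Set.indicator_nonneg (fun _ _ => by positivity) ω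
      linarith
  have hIndInt : Integrable (A'.indicator fun _ => M ^ q) ℙ :=
    (integrable_const (M ^ q)).indicator hA'meas
  have hRHSint : Integrable
      (fun ω => ε ^ q + (A'.indicator (fun _ => M ^ q) ω + M ^ (q - p) * W n ω ^ p)) ℙ :=
    (integrable_const _).add (hIndInt.add ((hWpint n).const_mul _))
  have hle := integral_mono_of_nonneg
    (ae_of_all _ fun ω => Real.rpow_nonneg (hWnonneg n ω) q) hRHSint
    (ae_of_all _ hptwise)
  have hRHSval : ∫ ω, (ε ^ q + (A'.indicator (fun _ => M ^ q) ω
      + M ^ (q - p) * W n ω ^ p)) ∂ℙ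
      = ε ^ q + ((ℙ {ω | ε ≤ W n ω}).toReal * M ^ q + M ^ (q - p) * ∫ ω, W n ω ^ p ∂ℙ) := by
    have e1 : (fun ω => ε ^ q + (A'.indicator (fun _ => M ^ q) ω + M ^ (q - p) * W n ω ^ p))
        = (fun _ => ε ^ q) + ((A'.indicator fun _ => M ^ q) + fun ω => M ^ (q - p) * W n ω ^ p) :=
      rfl
    rw [e1, integral_add' (integrable_const _) (hIndInt.add ((hWpint n).const_mul _)),
      integral_add' hIndInt ((hWpint n).const_mul _), integral_indicator_const _ hA'meas,
      integral_const_mul, integral_const]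
    have h5 : ℙ A' = ℙ {ω | ε ≤ W n ω} := measure_toMeasurable _
    simp [h5, smul_eq_mul, Measure.real]
  rw [hRHSval] at hle
  have hfin : M ^ (q - p) * ∫ ω, W n ω ^ p ∂ℙ ≤ M ^ (q - p) * C2 :=
    mul_le_mul_of_nonneg_left (hWpbdd n) (Real.rpow_nonneg hM0.le _)
  have hnn : 0 ≤ ∫ ω, W n ω ^ q ∂ℙ :=
    integral_nonneg fun ω => Real.rpow_nonneg (hWnonneg n ω) q
  rw [Real.norm_eq_abs, abs_of_nonneg hnn]
  have hcm : (ℙ {ω | ε ≤ W n ω}).toReal * M ^ q = M ^ q * (ℙ {ω | ε ≤ W n ω}).toReal := by ring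
  calc ∫ ω, W n ω ^ q ∂ℙ
      ≤ ε ^ q + ((ℙ {ω | ε ≤ W n ω}).toReal * M ^ q + M ^ (q - p) * ∫ ω, W n ω ^ p ∂ℙ) := hle
    _ < θ := by rw [hεq, hcm]; linarith
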